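/- Let m < n and let S be a formal m-partite Bell expression of the form S = P(0⃗|0⃗) − ∑_{(a⃗,x⃗)≠(0⃗,0⃗)} β_{a⃗}^{x⃗} P(a⃗|x⃗) with all β_{a⃗}^{x⃗} ≥ 0. Then for any n-partite probability distribution P, the lifted expression S_{0⃗|0⃗} minus P(0⃗|0⃗) is nonpositive: S_{0⃗|0⃗}(P) − P(0⃗|0⃗) ≤ 0. Consequently, if additionally S ≤ 0 holds for all biseparable m-partite no-signalling distributions, then for a bipartition of the n parties in which at most k of the C(n,m) (or otherwise specified) m-subsets are contained in one group, the sum of the lifted expressions over a family of m-subsets minus k·P(0⃗|0⃗) is nonpositive on all biseparable distributions. -/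

import Mathlib

open Finset

noncomputable section

/-- The all-zero string. -/
def zvec (n : ℕ) : Fin n → Fin 2 := fun _ => 0

/-- `Q` depends only on the outcomes and inputs of the parties in `S`. -/
def DepOn {n : ℕ} (S : Finset (Fin n))
    (Q : (Fin n → Fin 2) → (Fin n → Fin 2) → ℝ) : Prop :=
  ∀ a a' x x' : Fin n → Fin 2, (∀ k ∈ S, a k = a' k) → (∀ k ∈ S, x k = x' k) →
    Q a x = Q a' x'

/-- `Q` is a probability distribution on the group `S` of parties. -/
def IsDistOn {n : ℕ} (S : Finset (Fin n))
    (Q : (Fin n → Fin 2) → (Fin n → Fin 2) → ℝ) : Prop :=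
  (∀ a x, 0 ≤ Q a x) ∧ (∀ x, ∑ a, Q a x = 2 ^ (n - S.card)) ∧ DepOn S Q

/-- `Q` is no-signalling. -/
def IsNS {n : ℕ} (Q : (Fin n → Fin 2) → (Fin n → Fin 2) → ℝ) : Prop :=
  ∀ (k : Fin n) (a x x' : Fin n → Fin 2), (∀ l, l ≠ k → x l = x' l) →
    ∑ v, Q (Function.update a k v) x = ∑ v, Q (Function.update a k v) x'

/-- `P` is an `n`-partite probability distribution. -/
def IsDist (n : ℕ) (P : (Fin n → Fin 2) → (Fin n → Fin 2) → ℝ) : Prop :=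
  (∀ a x, 0 ≤ P a x) ∧ (∀ x, ∑ a, P a x = 1)

/-- `P` is biseparable along the fixed bipartition `g | gᶜ`: a convex mixture of products
of no-signalling distributions on `g` and on `gᶜ`. -/
def BisepAlong {n : ℕ} (g : Finset (Fin n))
    (P : (Fin n → Fin 2) → (Fin n → Fin 2) → ℝ) : Prop :=
  ∃ (N : ℕ) (q : Fin N → ℝ)
    (Q R : Fin N → (Fin n → Fin 2) → (Fin n → Fin 2) → ℝ),
    (∀ l, 0 ≤ q l) ∧ (∑ l, q l = 1) ∧
    (∀ l, IsDistOn g (Q l) ∧ IsNS (Q l) ∧ IsDistOn gᶜ (R l) ∧ IsNS (R l)) ∧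
    (∀ a x, P a x = ∑ l, q l * Q l a x * R l a x)

/-- `P` is biseparable: a convex mixture, over (nontrivial) bipartitions `g λ | (g λ)ᶜ`,
of products of no-signalling distributions. -/
def Bisep (n : ℕ) (P : (Fin n → Fin 2) → (Fin n → Fin 2) → ℝ) : Prop :=
  ∃ (N : ℕ) (q : Fin N → ℝ) (g : Fin N → Finset (Fin n))
    (Q R : Fin N → (Fin n → Fin 2) → (Fin n → Fin 2) → ℝ),
    (∀ l, 0 ≤ q l) ∧ (∑ l, q l = 1) ∧
    (∀ l, (g l).Nonempty ∧ (g l)ᶜ.Nonempty) ∧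
    (∀ l, IsDistOn (g l) (Q l) ∧ IsNS (Q l) ∧ IsDistOn (g l)ᶜ (R l) ∧ IsNS (R l)) ∧
    (∀ a x, P a x = ∑ l, q l * Q l a x * R l a x)

/-- The value of the seed expression
`S = P(0⃗|0⃗) − ∑_{(a,x)≠(0⃗,0⃗)} β_a^x P(a|x)` on an `m`-partite assignment `P'`. -/
def seedVal (m : ℕ) (β : (Fin m → Fin 2) → (Fin m → Fin 2) → ℝ)
    (P' : (Fin m → Fin 2) → (Fin m → Fin 2) → ℝ) : ℝ :=
  P' (zvec m) (zvec m)
    - ∑ a, ∑ x, (if a = zvec m ∧ x = zvec m then 0 else β a x * P' a x)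

/-- Extension of an `m`-party string to `n` parties along an injection `e`, filling the
remaining coordinates with `0` (this realizes the lifting of the seed to the `m`-subset
`range e`). -/
def extend0 {m n : ℕ} (e : Fin m → Fin n) (a : Fin m → Fin 2) : Fin n → Fin 2 :=
  Function.extend e a (fun _ => 0)

/-- The lifting of the seed expression to `n` parties along the `m`-subset picked out by
the injection `e`: the inputs and outcomes of the remaining `n−m` parties are fixed
to `0`. -/
def seedLift (m n : ℕ) (β : (Fin m → Fin 2) → (Fin m → Fin 2) → ℝ)
    (e : Fin m → Fin n) (P : (Fin n → Fin 2) → (Fin n → Fin 2) → ℝ) : ℝ :=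
  P (zvec n) (zvec n)
    - ∑ a, ∑ x, (if a = zvec m ∧ x = zvec m then 0
        else β a x * P (extend0 e a) (extend0 e x))

/-!
Part (i) holds term by term: every subtracted term `β_a^x P(a 0⃗|x 0⃗)` is nonnegative.

For part (ii), a lifted seed whose parties lie in one group is bounded by `P(0⃗|0⃗)` by (i).
For a lifted seed whose parties meet both groups, fixing the other parties' inputs and
outputs to `0` turns each no-signalling factor of the decomposition of `P` into a
nonnegative multiple of an `m`-partite no-signalling distribution on the induced groups.
The seed evaluates nonpositively on their products, which are biseparable, and the seed is
linear, so the whole lifted term is nonpositive.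
-/

section Marginals

theorem sum_sum_update_eq_card_smul {ι α M : Type*} [Fintype ι] [DecidableEq ι]
    [Fintype α] [AddCommMonoid M] (f : (ι → α) → M) (j : ι) :
    ∑ a, ∑ v, f (Function.update a j v) = Fintype.card α • ∑ a, f a := by
  have hinv : Function.Involutive
      fun p : (ι → α) × α => (Function.update p.1 j p.2, p.1 j) := by
    rintro ⟨a, v⟩
    simp
  calc ∑ a, ∑ v, f (Function.update a j v)
      = ∑ p : (ι → α) × α, f (hinv.toPerm _ p).1 := by rw [Fintype.sum_prod_type]; rfl
    _ = ∑ p : (ι → α) × α, f p.1 := Equiv.sum_comp hinv.toPerm fun p => f p.1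
    _ = Fintype.card α • ∑ a, f a := by
      rw [Fintype.sum_prod_type, Finset.smul_sum]
      simp

theorem sum_mul_eq_of_depOn {ι α R : Type*} [Fintype ι] [DecidableEq ι] [Fintype α]
    [CommSemiring R] (s : Finset ι) (f g : (ι → α) → R)
    (hf : ∀ u v, (∀ i ∈ s, u i = v i) → f u = f v)
    (hg : ∀ u v, (∀ i ∉ s, u i = v i) → g u = g v) :
    Fintype.card (ι → α) • ∑ a, f a * g a = (∑ a, f a) * ∑ a, g a := by
  have hinv : Function.Involutive
      fun p : (ι → α) × (ι → α) => (s.piecewise p.1 p.2, s.piecewise p.2 p.1) := by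
    rintro ⟨u, v⟩
    ext i <;> by_cases hi : i ∈ s <;> simp [hi]
  have hf' : ∀ u v, f (s.piecewise u v) = f u := fun u v =>
    hf _ _ fun i hi => by simp [hi]
  have hg' : ∀ u v, g (s.piecewise u v) = g v := fun u v =>
    hg _ _ fun i hi => by simp [hi]
  calc Fintype.card (ι → α) • ∑ a, f a * g a
      = ∑ p : (ι → α) × (ι → α), f p.1 * g p.1 := by
        rw [Fintype.sum_prod_type, Finset.smul_sum]
        simp
    _ = ∑ p : (ι → α) × (ι → α), f (hinv.toPerm _ p).1 * g (hinv.toPerm _ p).1 :=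
        (Equiv.sum_comp hinv.toPerm fun p => f p.1 * g p.1).symm
    _ = (∑ a, f a) * ∑ a, g a := by
        simp [Fintype.sum_prod_type, hf', hg', Finset.sum_mul_sum]

end Marginals

section NoSignalling

variable {n : ℕ} {Q : (Fin n → Fin 2) → (Fin n → Fin 2) → ℝ}

theorem IsNS.sum_eq_of_eq_of_ne (hQ : IsNS Q) {k : Fin n} {x x' : Fin n → Fin 2}
    (hx : ∀ l, l ≠ k → x l = x' l) : ∑ a, Q a x = ∑ a, Q a x' := by
  have h := (sum_sum_update_eq_card_smul (fun a => Q a x) k).symm.trans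
    ((Finset.sum_congr rfl fun a _ => hQ k a x x' hx).trans
      (sum_sum_update_eq_card_smul (fun a => Q a x') k))
  simpa using h

theorem IsNS.sum_eq (hQ : IsNS Q) (x x' : Fin n → Fin 2) :
    ∑ a, Q a x = ∑ a, Q a x' := by
  suffices h : ∀ s : Finset (Fin n), ∑ a, Q a (s.piecewise x' x) = ∑ a, Q a x by
    simpa using (h univ).symm
  intro s
  induction s using Finset.induction_on with
  | empty => simp
  | insert k s _ ih =>
    rw [← ih, Finset.piecewise_insert]
    exact hQ.sum_eq_of_eq_of_ne fun l hl => Function.update_of_ne hl _ _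

end NoSignalling

section Restriction

variable {m n : ℕ} {e : Fin m → Fin n}

theorem extend0_apply (he : Function.Injective e) (a : Fin m → Fin 2) (j : Fin m) :
    extend0 e a (e j) = a j :=
  he.extend_apply a _ j

theorem extend0_apply_of_notMem_range (a : Fin m → Fin 2) {l : Fin n}
    (hl : l ∉ Set.range e) : extend0 e a l = 0 :=
  Function.extend_apply' a _ l hl

theorem extend0_eq_of_eq_on (he : Function.Injective e) {a a' : Fin m → Fin 2}
    {l : Fin n} (h : ∀ j, e j = l → a j = a' j) : extend0 e a l = extend0 e a' l := by
  by_cases hl : l ∈ Set.range e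
  · obtain ⟨j, rfl⟩ := hl
    rw [extend0_apply he, extend0_apply he, h j rfl]
  · rw [extend0_apply_of_notMem_range _ hl, extend0_apply_of_notMem_range _ hl]

theorem extend0_zvec : extend0 e (zvec m) = zvec n :=
  Function.extend_const e 0

theorem extend0_update (he : Function.Injective e) (a : Fin m → Fin 2) (j : Fin m)
    (v : Fin 2) :
    extend0 e (Function.update a j v) = Function.update (extend0 e a) (e j) v := by
  funext l
  by_cases hl : l = e j
  · subst hl
    simp [extend0_apply he]
  · rw [Function.update_of_ne hl]
    exact extend0_eq_of_eq_on he fun j' hj' =>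
      Function.update_of_ne (fun h => hl (by rw [← hj', h])) _ _

def restrict0 (e : Fin m → Fin n) (Q : (Fin n → Fin 2) → (Fin n → Fin 2) → ℝ) :
    (Fin m → Fin 2) → (Fin m → Fin 2) → ℝ :=
  fun a x => Q (extend0 e a) (extend0 e x)

theorem IsNS.restrict0 (he : Function.Injective e)
    {Q : (Fin n → Fin 2) → (Fin n → Fin 2) → ℝ} (hQ : IsNS Q) : IsNS (restrict0 e Q) := by
  intro j a x x' hx
  simp only [_root_.restrict0, extend0_update he]
  exact hQ (e j) _ _ _ fun l hl => extend0_eq_of_eq_on he fun j' hj' =>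
    hx j' fun h => hl (h ▸ hj'.symm)

theorem DepOn.restrict0 (he : Function.Injective e) {g : Finset (Fin n)}
    {T : Finset (Fin m)} (hT : ∀ j, e j ∈ g → j ∈ T)
    {Q : (Fin n → Fin 2) → (Fin n → Fin 2) → ℝ} (hQ : DepOn g Q) :
    DepOn T (restrict0 e Q) := by
  intro a a' x x' ha hx
  exact hQ _ _ _ _ (fun l hl => extend0_eq_of_eq_on he fun j hj => ha j (hT j (hj ▸ hl)))
    (fun l hl => extend0_eq_of_eq_on he fun j hj => hx j (hT j (hj ▸ hl)))

theorem seedLift_eq_seedVal_restrict0 (β : (Fin m → Fin 2) → (Fin m → Fin 2) → ℝ)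
    (P : (Fin n → Fin 2) → (Fin n → Fin 2) → ℝ) :
    seedLift m n β e P = seedVal m β (restrict0 e P) := by
  simp only [seedLift, seedVal, _root_.restrict0, extend0_zvec]

end Restriction

section Normalization

variable {m : ℕ}

theorem exists_eq_mul_isDistOn {S : Finset (Fin m)}
    {L : (Fin m → Fin 2) → (Fin m → Fin 2) → ℝ} (hL0 : ∀ a x, 0 ≤ L a x)
    (hdep : DepOn S L) (hns : IsNS L) :
    ∃ c : ℝ, 0 ≤ c ∧ ∃ L' : (Fin m → Fin 2) → (Fin m → Fin 2) → ℝ,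
      IsDistOn S L' ∧ IsNS L' ∧ ∀ a x, L a x = c * L' a x := by
  have hpow : (0 : ℝ) < 2 ^ (m - S.card) := by positivity
  set c : ℝ := (∑ a, L a (zvec m)) / 2 ^ (m - S.card)
  have hsum : ∀ x, ∑ a, L a x = c * 2 ^ (m - S.card) := fun x => by
    rw [hns.sum_eq x (zvec m), div_mul_cancel₀ _ hpow.ne']
  have hc0 : 0 ≤ c := div_nonneg (Finset.sum_nonneg fun a _ => hL0 a _) hpow.le
  rcases hc0.eq_or_lt with hc | hc
  · -- `L` vanishes, so any distribution on `S` will do: take the uniform one.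
    refine ⟨0, le_rfl, fun _ _ => 2 ^ (m - S.card) / 2 ^ m,
      ⟨fun _ _ => by positivity, fun x => ?_, fun _ _ _ _ _ _ => rfl⟩,
      fun _ _ _ _ _ => rfl, fun a x => ?_⟩
    · simp only [Finset.sum_const, Finset.card_univ, Fintype.card_fun, Fintype.card_fin,
        nsmul_eq_mul]
      push_cast
      field_simp
    · have hx := hsum x
      rw [← hc, zero_mul, Finset.sum_eq_zero_iff_of_nonneg fun a _ => hL0 a x] at hx
      simp [hx a]
  · refine ⟨c, hc.le, fun a x => L a x / c,
      ⟨fun a x => div_nonneg (hL0 a x) hc.le, fun x => ?_,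
        fun a a' x x' ha hx => by simp only [hdep a a' x x' ha hx]⟩,
      fun j a x x' hx => ?_, fun a x => (mul_div_cancel₀ _ hc.ne').symm⟩
    · rw [← Finset.sum_div, hsum x, mul_div_cancel_left₀ _ hc.ne']
    · simp only [← Finset.sum_div, hns j a x x' hx]

theorem isDist_mul_of_isDistOn {S : Finset (Fin m)}
    {Q R : (Fin m → Fin 2) → (Fin m → Fin 2) → ℝ}
    (hQ : IsDistOn S Q) (hR : IsDistOn Sᶜ R) : IsDist m fun a x => Q a x * R a x := by
  refine ⟨fun a x => mul_nonneg (hQ.1 a x) (hR.1 a x), fun x => ?_⟩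
  have hprod := sum_mul_eq_of_depOn S (fun a => Q a x) (fun a => R a x)
    (fun u v h => hQ.2.2 u v x x h fun _ _ => rfl)
    (fun u v h => hR.2.2 u v x x (fun k hk => h k (Finset.mem_compl.1 hk)) fun _ _ => rfl)
  have hS : S.card ≤ m := by simpa using S.card_le_univ
  rw [hQ.2.1 x, hR.2.1 x, Finset.card_compl, Fintype.card_fin, Nat.sub_sub_self hS,
    ← pow_add, Nat.sub_add_cancel hS] at hprod
  simpa [Fintype.card_fun] using hprod

theorem bisep_mul {S : Finset (Fin m)} (hS : S.Nonempty) (hSc : Sᶜ.Nonempty)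
    {Q R : (Fin m → Fin 2) → (Fin m → Fin 2) → ℝ}
    (hQ : IsDistOn S Q) (hQns : IsNS Q) (hR : IsDistOn Sᶜ R) (hRns : IsNS R) :
    Bisep m fun a x => Q a x * R a x :=
  ⟨1, fun _ => 1, fun _ => S, fun _ => Q, fun _ => R, fun _ => zero_le_one, by simp,
    fun _ => ⟨hS, hSc⟩, fun _ => ⟨hQ, hQns, hR, hRns⟩, fun a x => by simp⟩

end Normalization

section Seed

variable {m n : ℕ} (β : (Fin m → Fin 2) → (Fin m → Fin 2) → ℝ)

theorem seedVal_const_mul (t : ℝ) (F : (Fin m → Fin 2) → (Fin m → Fin 2) → ℝ) :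
    seedVal m β (fun a x => t * F a x) = t * seedVal m β F := by
  simp only [seedVal, mul_sub, Finset.mul_sum, mul_ite, mul_zero]
  congr 1
  refine Finset.sum_congr rfl fun a _ => Finset.sum_congr rfl fun x _ => ?_
  split_ifs <;> ring

theorem seedVal_sum {N : ℕ} (F : Fin N → (Fin m → Fin 2) → (Fin m → Fin 2) → ℝ) :
    seedVal m β (fun a x => ∑ l, F l a x) = ∑ l, seedVal m β (F l) := by
  have hterm : ∀ a x, (if a = zvec m ∧ x = zvec m then 0 else β a x * ∑ l, F l a x)
      = ∑ l, if a = zvec m ∧ x = zvec m then 0 else β a x * F l a x := fun a x => by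
    split_ifs <;> simp [Finset.mul_sum]
  simp only [seedVal, Finset.sum_sub_distrib, hterm]
  congr 1
  rw [eq_comm, Finset.sum_comm]
  exact Finset.sum_congr rfl fun a _ => Finset.sum_comm

theorem seedLift_sub_le_zero (hβ : ∀ a x, ¬(a = zvec m ∧ x = zvec m) → 0 ≤ β a x)
    (e : Fin m → Fin n) {P : (Fin n → Fin 2) → (Fin n → Fin 2) → ℝ}
    (hP : ∀ a x, 0 ≤ P a x) : seedLift m n β e P - P (zvec n) (zvec n) ≤ 0 := by
  rw [seedLift, sub_sub_cancel_left, neg_nonpos]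
  refine Finset.sum_nonneg fun a _ => Finset.sum_nonneg fun x _ => ?_
  split_ifs with h
  · exact le_rfl
  · exact mul_nonneg (hβ a x h) (hP _ _)

variable {β}

theorem seedVal_restrict0_mul_nonpos
    (hseed : ∀ P', IsDist m P' → Bisep m P' → seedVal m β P' ≤ 0)
    {e : Fin m → Fin n} (he : Function.Injective e) {g : Finset (Fin n)}
    (hin : ∃ j, e j ∈ g) (hout : ∃ j, e j ∉ g)
    {Q R : (Fin n → Fin 2) → (Fin n → Fin 2) → ℝ}
    (hQ : IsDistOn g Q) (hQns : IsNS Q) (hR : IsDistOn gᶜ R) (hRns : IsNS R) :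
    seedVal m β (fun a x => restrict0 e Q a x * restrict0 e R a x) ≤ 0 := by
  set S : Finset (Fin m) := univ.filter fun j => e j ∈ g
  obtain ⟨cQ, hcQ, Q', hQ', hQ'ns, hQeq⟩ := exists_eq_mul_isDistOn (fun _ _ => hQ.1 _ _)
    (hQ.2.2.restrict0 he (T := S) fun j hj => by simpa [S] using hj) (hQns.restrict0 he)
  obtain ⟨cR, hcR, R', hR', hR'ns, hReq⟩ := exists_eq_mul_isDistOn (fun _ _ => hR.1 _ _)
    (hR.2.2.restrict0 he (T := Sᶜ) fun j hj => by simpa [S] using hj) (hRns.restrict0 he)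
  have hfactor : (fun a x => restrict0 e Q a x * restrict0 e R a x)
      = fun a x => cQ * cR * (Q' a x * R' a x) := by
    funext a x
    simp only [restrict0, hQeq, hReq]
    ring
  obtain ⟨j, hj⟩ := hin
  obtain ⟨j', hj'⟩ := hout
  have hS : S.Nonempty := ⟨j, by simpa [S] using hj⟩
  have hSc : Sᶜ.Nonempty := ⟨j', by simpa [S] using hj'⟩
  rw [hfactor, seedVal_const_mul]
  exact mul_nonpos_of_nonneg_of_nonpos (mul_nonneg hcQ hcR)
    (hseed _ (isDist_mul_of_isDistOn hQ' hR') (bisep_mul hS hSc hQ' hQ'ns hR' hR'ns))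

theorem seedLift_nonpos_of_bisepAlong
    (hseed : ∀ P', IsDist m P' → Bisep m P' → seedVal m β P' ≤ 0)
    {e : Fin m → Fin n} (he : Function.Injective e) {g : Finset (Fin n)}
    (hin : ∃ j, e j ∈ g) (hout : ∃ j, e j ∉ g)
    {P : (Fin n → Fin 2) → (Fin n → Fin 2) → ℝ}
    (hP : BisepAlong g P) : seedLift m n β e P ≤ 0 := by
  obtain ⟨N, q, Q, R, hq, -, hQR, hPeq⟩ := hP
  have hsplit : restrict0 e P
      = fun a x => ∑ l, q l * (restrict0 e (Q l) a x * restrict0 e (R l) a x) := by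
    funext a x
    simp only [restrict0, hPeq, mul_assoc]
  rw [seedLift_eq_seedVal_restrict0 β, hsplit, seedVal_sum]
  refine Finset.sum_nonpos fun l _ => ?_
  rw [seedVal_const_mul]
  obtain ⟨hQ, hQns, hR, hRns⟩ := hQR l
  exact mul_nonpos_of_nonneg_of_nonpos (hq l)
    (seedVal_restrict0_mul_nonpos hseed he hin hout hQ hQns hR hRns)

end Seed

theorem stmt17_general (m n : ℕ)
    (β : (Fin m → Fin 2) → (Fin m → Fin 2) → ℝ)
    (hβ : ∀ a x, ¬(a = zvec m ∧ x = zvec m) → 0 ≤ β a x) :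
    (∀ (e : Fin m → Fin n), Function.Injective e →
      ∀ P, IsDist n P → seedLift m n β e P - P (zvec n) (zvec n) ≤ 0) ∧
    ((∀ P', IsDist m P' → Bisep m P' → seedVal m β P' ≤ 0) →
      ∀ (ι : ℕ) (e : Fin ι → Fin m → Fin n), (∀ i, Function.Injective (e i)) →
      ∀ (g : Finset (Fin n)) (k : ℕ),
        (univ.filter (fun i : Fin ι =>
            (∀ j, e i j ∈ g) ∨ (∀ j, e i j ∉ g))).card ≤ k →
      ∀ P, IsDist n P → BisepAlong g P →
        (∑ i, seedLift m n β (e i) P) - (k : ℝ) * P (zvec n) (zvec n) ≤ 0) := by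
  refine ⟨fun e _ P hP => seedLift_sub_le_zero β hβ e hP.1, ?_⟩
  intro hseed ι e he g k hk P hP hPg
  have hbound : ∀ i, seedLift m n β (e i) P
      ≤ if (∀ j, e i j ∈ g) ∨ (∀ j, e i j ∉ g) then P (zvec n) (zvec n) else 0 := by
    intro i
    split_ifs with hi
    · linarith [seedLift_sub_le_zero β hβ (e i) hP.1]
    · push Not at hi
      exact seedLift_nonpos_of_bisepAlong hseed (he i) hi.2 hi.1 hPg
  rw [sub_nonpos]
  calc ∑ i, seedLift m n β (e i) P
      ≤ ∑ i, if (∀ j, e i j ∈ g) ∨ (∀ j, e i j ∉ g) then P (zvec n) (zvec n) else 0 :=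
        Finset.sum_le_sum fun i _ => hbound i
    _ = (univ.filter fun i : Fin ι => (∀ j, e i j ∈ g) ∨ (∀ j, e i j ∉ g)).card
          * P (zvec n) (zvec n) := by
        rw [← Finset.sum_filter, Finset.sum_const, nsmul_eq_mul]
    _ ≤ k * P (zvec n) (zvec n) := by gcongr; exact hP.1 _ _

/-- for a seed `S = P(0⃗|0⃗) − ∑_{(a,x)≠(0⃗,0⃗)} β_a^x P(a|x)` with all
`β_a^x ≥ 0` and `m < n` parties: (i) for every `n`-partite probability distribution `P`
and every lifting, `S_{0⃗|0⃗}(P) − P(0⃗|0⃗) ≤ 0`; (ii) if moreover `S ≤ 0` holds on all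
biseparable `m`-partite no-signalling distributions, then for any bipartition `g` of the
`n` parties in which at most `k` members of a family of `m`-subsets (given by injections
`e i`) lie within one group, the sum of the lifted seed expressions minus `k·P(0⃗|0⃗)` is
nonpositive on every distribution biseparable along `g`. -/
theorem stmt17 (m n : ℕ) (hm : 1 ≤ m) (hmn : m < n)
    (β : (Fin m → Fin 2) → (Fin m → Fin 2) → ℝ)
    (hβ : ∀ a x, ¬(a = zvec m ∧ x = zvec m) → 0 ≤ β a x) :
    (∀ (e : Fin m → Fin n), Function.Injective e →
      ∀ P, IsDist n P → seedLift m n β e P - P (zvec n) (zvec n) ≤ 0) ∧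
    ((∀ P', IsDist m P' → Bisep m P' → seedVal m β P' ≤ 0) →
      ∀ (ι : ℕ) (e : Fin ι → Fin m → Fin n), (∀ i, Function.Injective (e i)) →
      ∀ (g : Finset (Fin n)) (k : ℕ),
        (univ.filter (fun i : Fin ι =>
            (∀ j, e i j ∈ g) ∨ (∀ j, e i j ∉ g))).card ≤ k →
      ∀ P, IsDist n P → BisepAlong g P →
        (∑ i, seedLift m n β (e i) P) - (k : ℝ) * P (zvec n) (zvec n) ≤ 0) :=
  stmt17_general m n β hβ

end
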